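/- arXiv:1611.01311 — 2 statements merged into one kernel-verified Lean document; each statement's English description precedes it below -/
import Mathlib

section
/- Let A be an integral domain of characteristic zero and σ a locally nilpotent derivation of A. Then ker σ is factorially closed in A: if a, b ∈ A are nonzero and ab ∈ ker σ, then a ∈ ker σ and b ∈ ker σ. -/
open Finset in
theorem iter_leibniz {A : Type*} [CommRing A] (σ : A → A)
    (hadd : ∀ a b : A, σ (a + b) = σ a + σ b)
    (hleib : ∀ a b : A, σ (a * b) = a * σ b + b * σ a)
    (a b : A) (n : ℕ) : σ^[n] (a * b)
      = ∑ i ∈ range (n+1), (n.choose i) • (σ^[i] a * σ^[n-i] b) := by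
  let σ' : A →+ A := AddMonoidHom.mk' σ hadd
  have hσ : σ = ⇑σ' := rfl
  induction n with
  | zero => simp
  | succ n ih =>
    set f : ℕ → A := fun j => σ^[j] a * σ^[n+1-j] b with hf
    have hstep : ∀ i ∈ range (n+1), σ ((n.choose i) • (σ^[i] a * σ^[n-i] b))
        = (n.choose i) • f i + (n.choose i) • f (i+1) := by
      intro i hi
      rw [Finset.mem_range] at hi
      have hi' : i ≤ n := Nat.lt_succ_iff.mp hi
      have e1 : n + 1 - i = (n - i) + 1 := by omega
      have e2 : n + 1 - (i+1) = n - i := by omega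
      rw [hσ, map_nsmul, ← hσ, hleib, smul_add, hf]
      dsimp only
      rw [e1, e2, Function.iterate_succ_apply' σ (n-i) b,
        Function.iterate_succ_apply' σ i a]
      congr 1
      rw [mul_comm]
    rw [Function.iterate_succ_apply', ih, hσ, map_sum, ← hσ,
      Finset.sum_congr rfl hstep, Finset.sum_add_distrib]
    have key : ∑ j ∈ range (n+2), ((n+1).choose j) • f j
        = (∑ i ∈ range (n+1), (n.choose i) • f i)
          + ∑ i ∈ range (n+1), (n.choose i) • f (i+1) := by
      rw [Finset.sum_range_succ' _ (n+1)]
      have h1 : ∀ i ∈ range (n+1), ((n+1).choose (i+1)) • f (i+1)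
          = (n.choose i) • f (i+1) + (n.choose (i+1)) • f (i+1) := by
        intro i _
        rw [Nat.choose_succ_succ, add_smul]
      rw [Finset.sum_congr rfl h1, Finset.sum_add_distrib]
      have h2 : ∑ i ∈ range (n+1), (n.choose i) • f i
          = f 0 + ∑ i ∈ range n, (n.choose (i+1)) • f (i+1) := by
        rw [Finset.sum_range_succ' _ n]
        simp [add_comm]
      have h3 : ∑ i ∈ range (n+1), (n.choose (i+1)) • f (i+1)
          = ∑ i ∈ range n, (n.choose (i+1)) • f (i+1) := by
        rw [Finset.sum_range_succ, Nat.choose_succ_self, zero_smul, add_zero]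
      rw [h3, h2, Nat.choose_zero_right, one_smul]
      abel
    exact key.symm

/-- the kernel of a locally nilpotent derivation on an integral domain of
characteristic zero is factorially closed. -/
theorem stmt2 {A : Type*} [CommRing A] [IsDomain A] [Algebra ℚ A] (σ : A → A)
    (hadd : ∀ a b : A, σ (a + b) = σ a + σ b)
    (hleib : ∀ a b : A, σ (a * b) = a * σ b + b * σ a)
    (hln : ∀ a : A, ∃ n : ℕ, σ^[n] a = 0)
    (a b : A) (ha : a ≠ 0) (hb : b ≠ 0) (hab : σ (a * b) = 0) :
    σ a = 0 ∧ σ b = 0 := by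
  classical
  haveI : CharZero A := charZero_of_injective_algebraMap (algebraMap ℚ A).injective
  have h0 : σ 0 = 0 := by
    have := hadd 0 0; simpa using this.symm
  have hiter0 : ∀ j : ℕ, σ^[j] (0 : A) = 0 := fun j => Function.iterate_fixed h0 j
  -- first show: if σ a = 0 then σ b = 0 (and symmetrically)
  have key1 : σ a = 0 → σ b = 0 := by
    intro h
    have : a * σ b = 0 := by
      have := hleib a b
      rw [h, mul_zero, add_zero] at this
      rw [← this, hab]
    rcases mul_eq_zero.mp this with h' | h'
    · exact absurd h' ha
    · exact h'
  have key2 : σ b = 0 → σ a = 0 := by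
    intro h
    have : b * σ a = 0 := by
      have := hleib a b
      rw [h, mul_zero, zero_add] at this
      rw [← this, hab]
    rcases mul_eq_zero.mp this with h' | h'
    · exact absurd h' hb
    · exact h'
  -- minimal nilpotency indices
  set m := Nat.find (hln a) with hmdef
  set n := Nat.find (hln b) with hndef
  have hm0 : σ^[m] a = 0 := Nat.find_spec (hln a)
  have hn0 : σ^[n] b = 0 := Nat.find_spec (hln b)
  have hm1 : 1 ≤ m := by
    rcases Nat.eq_zero_or_pos m with h | h
    · exfalso; apply ha; simpa [h] using hm0
    · exact h
  have hn1 : 1 ≤ n := by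
    rcases Nat.eq_zero_or_pos n with h | h
    · exfalso; apply hb; simpa [h] using hn0
    · exact h
  by_cases hm : m = 1
  · have hσa : σ a = 0 := by simpa [hm] using hm0
    exact ⟨hσa, key1 hσa⟩
  by_cases hn : n = 1
  · have hσb : σ b = 0 := by simpa [hn] using hn0
    exact ⟨key2 hσb, hσb⟩
  -- now m, n ≥ 2; derive a contradiction
  exfalso
  have hm2 : 2 ≤ m := by omega
  have hn2 : 2 ≤ n := by omega
  have hia : ∀ i : ℕ, m ≤ i → σ^[i] a = 0 := by
    intro i hi
    have : σ^[i] a = σ^[i - m] (σ^[m] a) := by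
      rw [← Function.iterate_add_apply]
      congr 1
      omega
    rw [this, hm0, hiter0]
  have hib : ∀ i : ℕ, n ≤ i → σ^[i] b = 0 := by
    intro i hi
    have : σ^[i] b = σ^[i - n] (σ^[n] b) := by
      rw [← Function.iterate_add_apply]
      congr 1
      omega
    rw [this, hn0, hiter0]
  set k := m + n - 2 with hkdef
  have hk1 : 1 ≤ k := by omega
  have hzero : σ^[k] (a * b) = 0 := by
    have : σ^[k] (a * b) = σ^[k - 1] (σ (a * b)) := by
      rw [← Function.iterate_succ_apply]
      congr 1
      omega
    rw [this, hab, hiter0]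
  rw [iter_leibniz σ hadd hleib a b k] at hzero
  have hsingle : ∑ i ∈ Finset.range (k+1), (k.choose i) • (σ^[i] a * σ^[k-i] b)
      = (k.choose (m-1)) • (σ^[m-1] a * σ^[k-(m-1)] b) := by
    apply Finset.sum_eq_single
    · intro i _ hi
      rcases lt_or_ge i (m-1) with h | h
      · rw [hib (k - i) (by omega), mul_zero, smul_zero]
      · rw [hia i (by omega), zero_mul, smul_zero]
    · intro h
      exact absurd (Finset.mem_range.mpr (by omega)) h
  rw [hsingle] at hzero
  have hc : σ^[m-1] a ≠ 0 := Nat.find_min (hln a) (by omega)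
  have hd : σ^[k-(m-1)] b ≠ 0 := by
    have : k - (m-1) = n - 1 := by omega
    rw [this]
    exact Nat.find_min (hln b) (by omega)
  have hchoose : (k.choose (m-1)) ≠ 0 := Nat.pos_iff_ne_zero.mp (Nat.choose_pos (by omega))
  rw [nsmul_eq_mul] at hzero
  rcases mul_eq_zero.mp hzero with h | h
  · exact hchoose (Nat.cast_eq_zero.mp h)
  · exact (mul_ne_zero hc hd) h
end

section
/- Nagata's lemma: let A be an integral domain, and let p ∈ A be a prime element such that the localization A[p^{-1}] is a unique factorization domain and A is Noetherian (or: every element of A admits a factorization into irreducibles). Then A is a unique factorization domain. -/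
theorem stmt8_general {A : Type*} [CommRing A] [IsDomain A] [IsNoetherianRing A]
    (p : A) (hp : Prime p)
    (B : Type*) [CommRing B] [Algebra A B] [IsLocalization.Away p B]
    (h : UniqueFactorizationMonoid B) :
    UniqueFactorizationMonoid A :=
  (UniqueFactorizationMonoid.iff_of_isLocalizationAway_of_prime hp B).mpr h

/-- Nagata's lemma: if `A` is a Noetherian integral domain, `p ∈ A` a
prime element such that the localization `A[p⁻¹]` is a UFD, then `A` is a UFD. -/
theorem stmt8 {A : Type*} [CommRing A] [IsDomain A] [IsNoetherianRing A]
    (p : A) (hp : Prime p)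
    (B : Type*) [CommRing B] [IsDomain B] [Algebra A B] [IsLocalization.Away p B]
    (h : UniqueFactorizationMonoid B) :
    UniqueFactorizationMonoid A :=
  stmt8_general p hp B h
end
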